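/- arXiv:1704.03715 — 2 statements merged into one kernel-verified Lean document; each statement's English description precedes it below -/
import Mathlib

section
/- If a sparse PLS (J,Λ) is line-preservingly modeled by a simple matroid M(E), then the matroid rank of E is at most rk(J,Λ) = |J| − |Λ|. -/
open scoped Classical
noncomputable section

/-! ### Lattice-theoretic preliminaries -/

/-- A tight embedding between bounded lattices: a cover-preserving lattice
homomorphism sending bottom to bottom. -/
def IsTightEmbedding {L L' : Type*} [Lattice L] [BoundedOrder L] [Lattice L'] [BoundedOrder L']
    (f : L → L') : Prop :=
  (∀ a b : L, f (a ⊔ b) = f a ⊔ f b) ∧ (∀ a b : L, f (a ⊓ b) = f a ⊓ f b) ∧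
    f ⊥ = ⊥ ∧ ∀ a b : L, a ⋖ b → f a ⋖ f b

/-- `Part(n)` is formalized as `Setoid (Fin n)`, the lattice of partitions of an
`n`-element set ordered by refinement. -/
def TightlyPartitionEmbeddable (L : Type*) [Lattice L] [BoundedOrder L] : Prop :=
  ∃ (n : ℕ) (f : L → Setoid (Fin n)), IsTightEmbedding f

/-- 2-distributivity. -/
def TwoDistrib (L : Type*) [Lattice L] : Prop :=
  ∀ a b c d : L, a ⊓ (b ⊔ c ⊔ d) = (a ⊓ (b ⊔ c)) ⊔ (a ⊓ (b ⊔ d)) ⊔ (a ⊓ (c ⊔ d))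

/-- `L` has a cover-preserving sublattice isomorphic to `M₄`: six elements
`b, t, a₁,…,a₄` with `b ⋖ aᵢ ⋖ t` (covers in `L`), `aᵢ ⊓ aⱼ = b`, `aᵢ ⊔ aⱼ = t`. -/
def HasCoverPreservingM4 (L : Type*) [Lattice L] : Prop :=
  ∃ (b t : L) (a : Fin 4 → L), Function.Injective a ∧
    (∀ i, b ⋖ a i) ∧ (∀ i, a i ⋖ t) ∧
    (∀ i j, i ≠ j → a i ⊓ a j = b) ∧ ∀ i j, i ≠ j → a i ⊔ a j = t

/-- Thin: 2-distributive and without cover-preserving `M₄`. -/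
def IsThin (L : Type*) [Lattice L] : Prop := TwoDistrib L ∧ ¬ HasCoverPreservingM4 L

/-- Height `d(L)` of a finite lattice: one less than the largest cardinality of a chain. -/
def latHeight (L : Type*) [Lattice L] [Fintype L] : ℕ :=
  (((Finset.univ : Finset (Finset L)).filter fun c : Finset L => IsChain (· ≤ ·) (c : Set L)).sup
    Finset.card) - 1

/-- The set `J(L)` of (nonzero) join-irreducible elements of a finite lattice. -/
def JFinset (L : Type*) [Lattice L] [Fintype L] : Finset L :=
  Finset.univ.filter fun p => SupIrred p

/-- `J(a) = {p ∈ J(L) : p ≤ a}`. -/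
def Jle {L : Type*} [Lattice L] [Fintype L] (a : L) : Finset L :=
  Finset.univ.filter fun p => SupIrred p ∧ p ≤ a

/-! ### Lattice congruences -/

/-- A congruence of a lattice. -/
structure LatCon (N : Type*) [Lattice N] where
  r : N → N → Prop
  refl : ∀ a, r a a
  symm : ∀ {a b}, r a b → r b a
  trans : ∀ {a b c}, r a b → r b c → r a c
  sup_comp : ∀ {a b c d}, r a b → r c d → r (a ⊔ c) (b ⊔ d)
  inf_comp : ∀ {a b c d}, r a b → r c d → r (a ⊓ c) (b ⊓ d)

/-- Containment of congruences. -/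
def LatCon.le {N : Type*} [Lattice N] (c d : LatCon N) : Prop := ∀ a b, c.r a b → d.r a b

/-- A maximal (proper) congruence: a coatom of the congruence lattice. -/
def LatCon.IsMaximal {N : Type*} [Lattice N] (c : LatCon N) : Prop :=
  (∃ a b, ¬ c.r a b) ∧ ∀ d : LatCon N, c.le d → d.le c ∨ ∀ a b, d.r a b

/-! ### Partial linear spaces -/

/-- A partial linear space with 3-element lines: any two distinct lines meet in
at most one point. -/
structure PLS (α : Type*) where
  J : Finset α
  Λ : Finset (Finset α)
  line_sub : ∀ ℓ ∈ Λ, ℓ ⊆ J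
  line_card : ∀ ℓ ∈ Λ, ℓ.card = 3
  line_inter : ∀ ℓ ∈ Λ, ∀ ℓ' ∈ Λ, ℓ ≠ ℓ' → (ℓ ∩ ℓ').card ≤ 1

/-- PLS-rank `rk(J,Λ) = |J| - |Λ|`. -/
def PLS.rk {α : Type*} (S : PLS α) : ℤ := (S.J.card : ℤ) - (S.Λ.card : ℤ)

/-- A path `[p₀,…,p_{n-1}]` together with its lines `ℓᵢ = [pᵢ,pᵢ₊₁]` (`i+1 < n`):
the lines exist, are distinct, and consecutive lines are the only intersecting ones. -/
structure PLSPath (α : Type*) where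
  n : ℕ
  two_le : 2 ≤ n
  p : ℕ → α
  line : ℕ → Finset α
  p_mem_left : ∀ i, i + 1 < n → p i ∈ line i
  p_mem_right : ∀ i, i + 1 < n → p (i + 1) ∈ line i
  p_ne : ∀ i, i + 1 < n → p i ≠ p (i + 1)
  lines_ne : ∀ i j, i < j → j + 1 < n → line i ≠ line j
  lines_inter_iff : ∀ i j, i < j → j + 1 < n → ((line i ∩ line j).Nonempty ↔ j = i + 1)

namespace PLSPath
variable {α : Type*}

/-- The underlying point set `P*` of a path. -/
def ptSet (P : PLSPath α) : Finset α := (Finset.range (P.n - 1)).biUnion P.line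

/-- First point of a path. -/
def first (P : PLSPath α) : α := P.p 0

/-- Last point of a path. -/
def last (P : PLSPath α) : α := P.p (P.n - 1)

/-- The set of lines of a path. -/
def lineSet (P : PLSPath α) : Finset (Finset α) := (Finset.range (P.n - 1)).image P.line

/-- The path lies in the line set `Λ`. -/
def In (P : PLSPath α) (Λ : Finset (Finset α)) : Prop := ∀ i, i + 1 < P.n → P.line i ∈ Λ

end PLSPath

/-- A cycle `(p₀,…,p_{n-1})`: a path whose closing line `[p_{n-1},p₀]` exists and
contains a point not on any path line. -/
structure PLSCycle (α : Type*) extends PLSPath α where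
  closing : Finset α
  closing_last : p (n - 1) ∈ closing
  closing_first : p 0 ∈ closing
  closing_new : ∃ q ∈ closing, ∀ i, i + 1 < n → q ∉ line i

namespace PLSCycle
variable {α : Type*}

/-- The cycle lies in the line set `Λ`. -/
def In (C : PLSCycle α) (Λ : Finset (Finset α)) : Prop :=
  C.toPLSPath.In Λ ∧ C.closing ∈ Λ

/-- The `i`-th `C`-line (for `i < n`; the last one is the closing line). -/
def cline (C : PLSCycle α) (i : ℕ) : Finset α :=
  if i + 1 < C.n then C.line i else C.closing

/-- The underlying point set `C*` of a cycle. -/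
def cptSet (C : PLSCycle α) : Finset α := (Finset.range C.n).biUnion C.cline

/-- The set `Λ*` of `C`-lines of a cycle. -/
def clineSet (C : PLSCycle α) : Finset (Finset α) := (Finset.range C.n).image C.cline

/-- `q` is the `C`-midpoint of the `i`-th `C`-line. -/
def IsMidpoint (C : PLSCycle α) (i : ℕ) (q : α) : Prop :=
  q ∈ C.cline i ∧ q ≠ C.p i ∧ q ≠ C.p ((i + 1) % C.n)

/-- `q` is a `C`-midpoint (of some `C`-line). -/
def IsMidpointPt (C : PLSCycle α) (q : α) : Prop := ∃ i < C.n, C.IsMidpoint i q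

/-- The set of `C`-midpoints. -/
def midSet (C : PLSCycle α) : Finset α := C.cptSet.filter fun q => C.IsMidpointPt q

end PLSCycle

/-- Acyclic PLS: it has no cycle. -/
def PLS.Acyclic {α : Type*} (S : PLS α) : Prop := ∀ C : PLSCycle α, ¬ C.In S.Λ

/-- QIMP: each line contains a quasi-isolated point. -/
def PLS.IsQIMP {α : Type*} (S : PLS α) : Prop :=
  ∀ ℓ ∈ S.Λ, ∃ q ∈ ℓ, ∀ ℓ' ∈ S.Λ, ℓ' ≠ ℓ → q ∉ ℓ'

/-- UMP: any line that occurs as a `C`-line has a unique midpoint, independent of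
the cycle. -/
def PLS.IsUMP {α : Type*} (S : PLS α) : Prop :=
  ∀ C C' : PLSCycle α, C.In S.Λ → C'.In S.Λ → ∀ i j, i < C.n → j < C'.n →
    C.cline i = C'.cline j →
    ∀ q q', C.IsMidpoint i q → C'.IsMidpoint j q' → q = q'

/-- `(J,Λ)` is a tree of the PLSes `F 0, …, F (t-1)`. -/
def PLS.IsTreeOf {α : Type*} (S : PLS α) (t : ℕ) (F : ℕ → PLS α) : Prop :=
  S.J = (Finset.range t).biUnion (fun i => (F i).J) ∧
  S.Λ = (Finset.range t).biUnion (fun i => (F i).Λ) ∧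
  ∀ i, 0 < i → i < t → ∃ x, (F i).J ∩ (Finset.range i).biUnion (fun j => (F j).J) = {x}

/-- Sparse PLS: a testifying ordering of the lines exists. -/
def PLS.Sparse {α : Type*} (S : PLS α) : Prop :=
  ∃ ℓ : ℕ → Finset α, (∀ i, i < S.Λ.card → ℓ i ∈ S.Λ) ∧
    (∀ i j, i < S.Λ.card → j < S.Λ.card → i ≠ j → ℓ i ≠ ℓ j) ∧
    ∀ i, i + 1 < S.Λ.card → ¬ ℓ (i + 1) ⊆ (Finset.range (i + 1)).biUnion ℓ

/-- Small girth: every cycle consists of three or four lines. -/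
def PLS.SmallGirth {α : Type*} (S : PLS α) : Prop :=
  ∀ C : PLSCycle α, C.In S.Λ → C.n = 3 ∨ C.n = 4

/-- Type 1 midpoint-link of the cycle `C`: a path from a `C`-midpoint to a
`C`-junction meeting `C*` only in its endpoints. -/
def IsType1Link {α : Type*} (C : PLSCycle α) (P : PLSPath α) : Prop :=
  C.IsMidpointPt P.first ∧ (∃ j < C.n, P.last = C.p j) ∧
    P.ptSet ∩ C.cptSet = {P.first, P.last}

/-- Type 2 midpoint-link of the cycle `C`: a path between two `C`-midpoints meeting
`C*` only in its endpoints. -/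
def IsType2Link {α : Type*} (C : PLSCycle α) (P : PLSPath α) : Prop :=
  C.IsMidpointPt P.first ∧ C.IsMidpointPt P.last ∧ P.first ≠ P.last ∧
    P.ptSet ∩ C.cptSet = {P.first, P.last}

/-- Benign type 1 link: the midpoint and junction sit on a common `C`-line. -/
def Benign1 {α : Type*} (C : PLSCycle α) (P : PLSPath α) : Prop :=
  ∃ i < C.n, P.first ∈ C.cline i ∧ P.last ∈ C.cline i

/-- Benign type 2 link: the two midpoints sit on intersecting `C`-lines. -/
def Benign2 {α : Type*} (C : PLSCycle α) (P : PLSPath α) : Prop :=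
  ∃ i, i < C.n ∧ ∃ j, j < C.n ∧ C.IsMidpoint i P.first ∧ C.IsMidpoint j P.last ∧
    (C.cline i ∩ C.cline j).Nonempty

/-- A benign midpoint-link (of either type). -/
def BenignLink {α : Type*} (C : PLSCycle α) (P : PLSPath α) : Prop :=
  (IsType1Link C P ∧ Benign1 C P) ∨ (IsType2Link C P ∧ Benign2 C P)

/-- BMPL: every midpoint-link of every cycle is benign. -/
def PLS.IsBMPL {α : Type*} (S : PLS α) : Prop :=
  ∀ C : PLSCycle α, C.In S.Λ → ∀ P : PLSPath α, P.In S.Λ →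
    (IsType1Link C P → Benign1 C P) ∧ (IsType2Link C P → Benign2 C P)

/-- All midpoint-links are of type 1, i.e. there are no type 2 midpoint-links. -/
def PLS.OnlyType1Links {α : Type*} (S : PLS α) : Prop :=
  ∀ C : PLSCycle α, C.In S.Λ → ∀ P : PLSPath α, P.In S.Λ → ¬ IsType2Link C P

/-- `S'` arises from `S` by adding the path `P`. -/
def AddsOnePath {α : Type*} (S' S : PLS α) (P : PLSPath α) : Prop :=
  P.In S'.Λ ∧ S'.J = S.J ∪ P.ptSet ∧ S.J ∩ P.ptSet = {P.first, P.last} ∧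
    (∀ i, i + 1 < P.n → P.line i ∉ S.Λ) ∧ S'.Λ = S.Λ ∪ P.lineSet

/-- `S'` arises from `S` by adding a benign midpoint-link. -/
def AddsBenignLink {α : Type*} (S' S : PLS α) : Prop :=
  ∃ (P : PLSPath α) (C : PLSCycle α), C.In S.Λ ∧ AddsOnePath S' S P ∧ BenignLink C P

/-- `S'` arises from `S` by adding a benign midpoint-link of type 1. -/
def AddsBenignLink1 {α : Type*} (S' S : PLS α) : Prop :=
  ∃ (P : PLSPath α) (C : PLSCycle α), C.In S.Λ ∧ AddsOnePath S' S P ∧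
    IsType1Link C P ∧ Benign1 C P

/-- Augmented UMP: obtained from a UMP by iteratively adding benign midpoint-links. -/
def PLS.IsAugmentedUMP {α : Type*} (S : PLS α) : Prop :=
  ∃ S₀ : PLS α, S₀.IsUMP ∧ Relation.ReflTransGen (fun X Y => AddsBenignLink Y X) S₀ S

/-- Augmented UMP of type 1: only benign midpoint-links of type 1 were added. -/
def PLS.IsAugmentedUMP1 {α : Type*} (S : PLS α) : Prop :=
  ∃ S₀ : PLS α, S₀.IsUMP ∧ Relation.ReflTransGen (fun X Y => AddsBenignLink1 Y X) S₀ S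

/-! ### Graphs -/

/-- `T` is the edge set of a triangle of `G`. -/
def IsTriangle {V : Type*} (G : SimpleGraph V) (T : Finset (Sym2 V)) : Prop :=
  ∃ a b c : V, G.Adj a b ∧ G.Adj b c ∧ G.Adj a c ∧ T = {s(a, b), s(b, c), s(a, c)}

/-- `Γ` is the edge set of a circuit of `G`. -/
def IsCircuitSet {V : Type*} (G : SimpleGraph V) (Γ : Finset (Sym2 V)) : Prop :=
  ∃ (v : V) (w : G.Walk v v), w.IsCycle ∧ w.edges.toFinset = Γ

/-- `Γ` is the edge set of a chordless circuit of `G`. -/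
def IsChordlessCircuit {V : Type*} (G : SimpleGraph V) (Γ : Finset (Sym2 V)) : Prop :=
  ∃ (v : V) (w : G.Walk v v), w.IsCycle ∧ w.edges.toFinset = Γ ∧
    ∀ a b : V, a ∈ w.support → b ∈ w.support → G.Adj a b → s(a, b) ∈ Γ

/-- `W` is the edge set of a wheel of `G` (degenerate wheel = triangle). -/
def IsWheel {V : Type*} (G : SimpleGraph V) (W : Finset (Sym2 V)) : Prop :=
  ∃ (n : ℕ) (hub : V) (v : ℕ → V), 2 ≤ n ∧
    (∀ i j, i < n → j < n → i ≠ j → v i ≠ v j) ∧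
    (∀ i, i < n → G.Adj hub (v i)) ∧
    (∀ i, i < n → G.Adj (v i) (v ((i + 1) % n))) ∧
    W = (Finset.range n).image (fun i => s(hub, v i)) ∪
        (Finset.range n).image (fun i => s(v i, v ((i + 1) % n)))

/-- Rank of an edge set `B` in the cycle matroid on the vertex set `V`:
`|V|` minus the number of connected components of `(V, B)`. -/
def grkOn (V : Type*) [Fintype V] (B : Finset (Sym2 V)) : ℕ :=
  Fintype.card V - Nat.card (SimpleGraph.fromEdgeSet (B : Set (Sym2 V))).ConnectedComponent

/-- Rank of the cycle matroid of the graph `G` (on its full edge set). -/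
def graphRank {V : Type*} [Fintype V] (G : SimpleGraph V) : ℕ :=
  Fintype.card V - Nat.card G.ConnectedComponent

/-- Closure of an edge set in the cycle matroid of `G`. -/
def graphCl {V : Type*} [Fintype V] (G : SimpleGraph V) (B : Finset (Sym2 V)) : Set (Sym2 V) :=
  {e | e ∈ G.edgeSet ∧ grkOn V (insert e B) = grkOn V B}

/-- The partition of the vertex set into connected components of `(V, B)`. -/
def compSetoid {V : Type*} (B : Finset (Sym2 V)) : Setoid V :=
  ⟨fun a b => (SimpleGraph.fromEdgeSet (B : Set (Sym2 V))).Reachable a b,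
    ⟨fun a => SimpleGraph.Reachable.refl a, fun h => h.symm, fun h h' => h.trans h'⟩⟩

/-- `ψ` line-preservingly models the PLS `S` by the graph `G`: it is a bijection from
the points onto the edges taking each line to (the edge set of) a triangle. -/
def LinePres {α V : Type*} (S : PLS α) (G : SimpleGraph V) (ψ : α → Sym2 V) : Prop :=
  Set.BijOn ψ (S.J : Set α) G.edgeSet ∧ ∀ ℓ ∈ S.Λ, IsTriangle G (ℓ.image ψ)

/-- Line-preserving rank-modeling by a graph. -/
def LinePresRankModels {α V : Type*} [Fintype V] (S : PLS α) (G : SimpleGraph V)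
    (ψ : α → Sym2 V) : Prop :=
  LinePres S G ψ ∧ (graphRank G : ℤ) = S.rk

/-- Cycle-preservation: the midpoints of each cycle map to a circuit of `G`. -/
def CyclePresCond {α V : Type*} (S : PLS α) (G : SimpleGraph V) (ψ : α → Sym2 V) : Prop :=
  ∀ C : PLSCycle α, C.In S.Λ → IsCircuitSet G (C.midSet.image ψ)

/-- Circuit-friendliness: each chordless circuit of `G` corresponds to a line or to
the set of midpoints of a cycle of `S`. -/
def CircuitFriendlyCond {α V : Type*} (S : PLS α) (G : SimpleGraph V) (ψ : α → Sym2 V) : Prop :=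
  ∀ Γ : Finset (Sym2 V), IsChordlessCircuit G Γ →
    (∃ ℓ ∈ S.Λ, ∀ x ∈ S.J, (ψ x ∈ Γ ↔ x ∈ ℓ)) ∨
    (∃ C : PLSCycle α, C.In S.Λ ∧ ∀ x ∈ S.J, (ψ x ∈ Γ ↔ C.IsMidpointPt x))

/-! ### Matroids -/

/-- A (finite) matroid on a finite ground set, given by its independent sets. -/
structure FinMatroid (β : Type*) where
  E : Finset β
  Indep : Finset β → Prop
  indep_subset : ∀ I, Indep I → I ⊆ E
  indep_empty : Indep ∅
  indep_mono : ∀ I J, Indep J → I ⊆ J → Indep I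
  indep_exchange : ∀ I J, Indep I → Indep J → I.card < J.card →
    ∃ x ∈ J, x ∉ I ∧ Indep (insert x I)

namespace FinMatroid
variable {β : Type*}

/-- Rank of a subset. -/
def rkOn (M : FinMatroid β) (X : Finset β) : ℕ :=
  (X.powerset.filter fun I => M.Indep I).sup Finset.card

/-- Rank of the matroid. -/
def rk (M : FinMatroid β) : ℕ := M.rkOn M.E

/-- Closure of a subset. -/
def cl (M : FinMatroid β) (X : Finset β) : Finset β :=
  M.E.filter fun e => M.rkOn (insert e (X ∩ M.E)) = M.rkOn (X ∩ M.E)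

/-- Simple matroid: all subsets of cardinality at most 2 are independent. -/
def IsSimple (M : FinMatroid β) : Prop :=
  ∀ X : Finset β, X ⊆ M.E → X.card ≤ 2 → M.Indep X

/-- Flat (closed set) of a matroid. -/
def Flat (M : FinMatroid β) (F : Finset β) : Prop := F ⊆ M.E ∧ M.cl F = F

/-- Binary matroid: representable over GF(2). -/
def IsBinary (M : FinMatroid β) : Prop :=
  ∃ (m : ℕ) (ρ : β → (Fin m → ZMod 2)),
    ∀ I : Finset β, I ⊆ M.E →
      (M.Indep I ↔ LinearIndependent (ZMod 2) fun x : {y // y ∈ I} => ρ x.1)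

/-- Graphic matroid: isomorphic to the cycle matroid of a graph. -/
def IsGraphic (M : FinMatroid β) : Prop :=
  ∃ (k : ℕ) (G : SimpleGraph (Fin k)) (φ : β → Sym2 (Fin k)),
    Set.BijOn φ (M.E : Set β) G.edgeSet ∧
    ∀ I : Finset β, I ⊆ M.E →
      (M.Indep I ↔ ∀ Γ : Finset (Sym2 (Fin k)), IsCircuitSet G Γ →
        ¬ (Γ : Set (Sym2 (Fin k))) ⊆ φ '' (I : Set β))

end FinMatroid

/-- `ψ` line-preservingly models the PLS `S` by the matroid `M`: a bijection from the
points onto the ground set taking each line to a dependent set. -/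
def LinePresMatroid {α β : Type*} (S : PLS α) (M : FinMatroid β) (ψ : α → β) : Prop :=
  Set.BijOn ψ (S.J : Set α) (M.E : Set β) ∧ ∀ ℓ ∈ S.Λ, ¬ M.Indep (ℓ.image ψ)

/-- Graph-trigger: every simple binary matroid that line-preservingly rank-models `S`
is graphic. -/
def PLS.GraphTrigger {α : Type*} (S : PLS α) : Prop :=
  ∀ (β : Type) (M : FinMatroid β) (ψ : α → β),
    M.IsSimple → M.IsBinary → LinePresMatroid S M ψ → (M.rk : ℤ) = S.rk → M.IsGraphic

/-! ### Lines of modular lattices, MoPLSes, lattice-modeling -/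

/-- All pairs of distinct elements of `m` have the same join. -/
def ConstJoin {L : Type*} [Lattice L] (m : Finset L) : Prop :=
  ∀ p ∈ m, ∀ q ∈ m, ∀ p' ∈ m, ∀ q' ∈ m, p ≠ q → p' ≠ q' → p ⊔ q = p' ⊔ q'

/-- A line of a modular lattice: a 3-element subset of `J(L)` with constant pairwise
join, maximal with this property. -/
def IsLine (L : Type*) [Lattice L] [Fintype L] (ℓ : Finset L) : Prop :=
  ℓ ⊆ JFinset L ∧ ℓ.card = 3 ∧ ConstJoin ℓ ∧
    ∀ m : Finset L, m ⊆ JFinset L → ℓ ⊆ m → ConstJoin m → m = ℓ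

/-- The join of a line. -/
def lineJoin {L : Type*} [Lattice L] [BoundedOrder L] (ℓ : Finset L) : L := ℓ.sup id

/-- A MoPLS of `L`: the PLS on `J(L)` whose lines form a maximal family of pairwise
inequivalent lines of `L`. -/
def IsMoPLS (L : Type*) [Lattice L] [BoundedOrder L] [Fintype L] (S : PLS L) : Prop :=
  S.J = JFinset L ∧ (∀ ℓ ∈ S.Λ, IsLine L ℓ) ∧
    (∀ ℓ ∈ S.Λ, ∀ ℓ' ∈ S.Λ, ℓ ≠ ℓ' → lineJoin ℓ ≠ lineJoin ℓ') ∧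
    ∀ m : Finset L, IsLine L m → ∃ ℓ ∈ S.Λ, lineJoin ℓ = lineJoin m

/-- A graph lattice-models a finite lattice `L` via `φ`: `φ` is a bijection from
`J(L)` onto the edge set, all sets `φ(J(a))` are closed in the cycle matroid, and the
rank of the cycle matroid equals the height of `L`. -/
def LatticeModelsGraph (L : Type*) [Lattice L] [BoundedOrder L] [Fintype L]
    {V : Type*} [Fintype V] (G : SimpleGraph V) (φ : L → Sym2 V) : Prop :=
  Set.BijOn φ (JFinset L : Set L) G.edgeSet ∧
    (∀ a : L, graphCl G ((Jle a).image φ) = (((Jle a).image φ : Finset (Sym2 V)) : Set (Sym2 V))) ∧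
    graphRank G = latHeight L


section RankHelpers

variable {β : Type*} (M : FinMatroid β)

lemma aux_indep_card_le_rkOn {I X : Finset β} (hI : M.Indep I) (hIX : I ⊆ X) :
    I.card ≤ M.rkOn X :=
  Finset.le_sup (Finset.mem_filter.2 ⟨Finset.mem_powerset.2 hIX, hI⟩)

lemma aux_exists_max_indep (X : Finset β) :
    ∃ I, M.Indep I ∧ I ⊆ X ∧ I.card = M.rkOn X := by
  have hne : (X.powerset.filter fun I => M.Indep I).Nonempty :=
    ⟨∅, Finset.mem_filter.2 ⟨Finset.mem_powerset.2 (Finset.empty_subset X), M.indep_empty⟩⟩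
  obtain ⟨I, hI, hcard⟩ := Finset.exists_mem_eq_sup _ hne Finset.card
  rw [Finset.mem_filter, Finset.mem_powerset] at hI
  exact ⟨I, hI.2, hI.1, hcard.symm⟩

lemma aux_rkOn_mono {X Y : Finset β} (h : X ⊆ Y) : M.rkOn X ≤ M.rkOn Y := by
  apply Finset.sup_le
  intro I hI
  rw [Finset.mem_filter, Finset.mem_powerset] at hI
  exact aux_indep_card_le_rkOn M hI.2 (hI.1.trans h)

lemma aux_rkOn_le_card (X : Finset β) : M.rkOn X ≤ X.card := by
  apply Finset.sup_le
  intro I hI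
  rw [Finset.mem_filter, Finset.mem_powerset] at hI
  exact Finset.card_le_card hI.1

lemma aux_exists_extend : ∀ (n : ℕ) (X I : Finset β), M.rkOn X - I.card ≤ n →
    M.Indep I → I ⊆ X → ∃ B, M.Indep B ∧ I ⊆ B ∧ B ⊆ X ∧ B.card = M.rkOn X := by
  intro n
  induction n with
  | zero =>
    intro X I hn hI hIX
    exact ⟨I, hI, subset_refl I, hIX,
      le_antisymm (aux_indep_card_le_rkOn M hI hIX) (by omega)⟩
  | succ n ih =>
    intro X I hn hI hIX
    by_cases h : M.rkOn X ≤ I.card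
    · exact ⟨I, hI, subset_refl I, hIX,
        le_antisymm (aux_indep_card_le_rkOn M hI hIX) h⟩
    · obtain ⟨J, hJ, hJX, hJcard⟩ := aux_exists_max_indep M X
      obtain ⟨x, hxJ, hxI, hins⟩ := M.indep_exchange I J hI hJ (by omega)
      obtain ⟨B, h1, h2, h3, h4⟩ := ih X (insert x I)
        (by rw [Finset.card_insert_of_notMem hxI]; omega) hins
        (Finset.insert_subset (hJX hxJ) hIX)
      exact ⟨B, h1, (Finset.subset_insert x I).trans h2, h3, h4⟩

lemma aux_rkOn_insert_of_spanned {X Y : Finset β} {e : β} (hYX : Y ⊆ X)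
    (he : M.rkOn (insert e Y) = M.rkOn Y) : M.rkOn (insert e X) = M.rkOn X := by
  by_cases heX : e ∈ X
  · rw [Finset.insert_eq_self.2 heX]
  refine le_antisymm ?_ (aux_rkOn_mono M (Finset.subset_insert e X))
  apply Finset.sup_le
  intro I hI
  rw [Finset.mem_filter, Finset.mem_powerset] at hI
  obtain ⟨hIX, hIind⟩ := hI
  by_cases heI : e ∈ I
  · by_contra hlt
    push_neg at hlt
    obtain ⟨J, hJ, hJY, hJcard⟩ := aux_exists_max_indep M Y
    have heY : e ∉ Y := fun h => heX (hYX h)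
    have hinsJ : ¬ M.Indep (insert e J) := by
      intro hind
      have h2 := aux_indep_card_le_rkOn M hind (Finset.insert_subset_insert e hJY)
      rw [he, Finset.card_insert_of_notMem (fun h => heY (hJY h))] at h2
      omega
    obtain ⟨B, hB, hJB, hBX, hBcard⟩ :=
      aux_exists_extend M (M.rkOn X) X J (by omega) hJ (hJY.trans hYX)
    obtain ⟨x, hxI, hxB, hinsB⟩ := M.indep_exchange B I hB hIind (by omega)
    by_cases hxe : x = e
    · subst hxe
      exact hinsJ (M.indep_mono _ _ hinsB (Finset.insert_subset_insert _ hJB))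
    · have hxX : x ∈ X := by
        rcases Finset.mem_insert.1 (hIX hxI) with h | h
        · exact absurd h hxe
        · exact h
      have h2 := aux_indep_card_le_rkOn M hinsB (Finset.insert_subset hxX hBX)
      rw [Finset.card_insert_of_notMem hxB] at h2
      omega
  · refine aux_indep_card_le_rkOn M hIind (fun y hy => ?_)
    rcases Finset.mem_insert.1 (hIX hy) with h | h
    · exact absurd (h ▸ hy) heI
    · exact h

end RankHelpers

theorem statement_4 {α β : Type} (S : PLS α) (hsp : S.Sparse)
    (M : FinMatroid β) (hsimple : M.IsSimple) (ψ : α → β)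
    (hmod : LinePresMatroid S M ψ) :
    (M.rk : ℤ) ≤ S.rk := by
  classical
  obtain ⟨hbij, hdep⟩ := hmod
  obtain ⟨ℓ, hmem, hlne, hnew⟩ := hsp
  have hinj : Set.InjOn ψ (S.J : Set α) := hbij.injOn
  -- |E| = |J|
  have hEJ : M.E = S.J.image ψ := by
    apply Finset.coe_injective
    rw [Finset.coe_image, hbij.image_eq]
  have hcardEJ : M.E.card = S.J.card := by
    rw [hEJ, Finset.card_image_of_injOn hinj]
  set t := S.Λ.card with ht
  by_cases ht0 : t = 0
  · have h1 : M.rk ≤ M.E.card := aux_rkOn_le_card M M.E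
    rw [PLS.rk, ← ht, ht0]
    push_cast
    omega
  -- choose the new points
  have hp : ∀ i, i < t → ∃ x, x ∈ ℓ i ∧ ∀ j, j < i → x ∉ ℓ j := by
    intro i hi
    match i with
    | 0 =>
      have h3 : (ℓ 0).card = 3 := S.line_card _ (hmem 0 hi)
      obtain ⟨x, hx⟩ : (ℓ 0).Nonempty := Finset.card_pos.1 (by omega)
      exact ⟨x, hx, fun j hj => absurd hj (Nat.not_lt_zero j)⟩
    | (i + 1) =>
      have h := hnew i hi
      rw [Finset.not_subset] at h
      obtain ⟨x, hx1, hx2⟩ := h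
      refine ⟨x, hx1, fun j hj hxj => hx2 ?_⟩
      exact Finset.mem_biUnion.2 ⟨j, Finset.mem_range.2 hj, hxj⟩
  have hT : 0 < t := Nat.pos_of_ne_zero ht0
  obtain ⟨x0, hx00, -⟩ := hp 0 hT
  set P : ℕ → α := fun i => if h : i < t then (hp i h).choose else x0 with hPdef
  have hP1 : ∀ i, i < t → P i ∈ ℓ i := by
    intro i h
    simp only [hPdef, dif_pos h]
    exact (hp i h).choose_spec.1
  have hP2 : ∀ i, i < t → ∀ j, j < i → P i ∉ ℓ j := by
    intro i h
    simp only [hPdef, dif_pos h]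
    exact (hp i h).choose_spec.2
  have hPJ : ∀ i, i < t → P i ∈ S.J := fun i h => S.line_sub _ (hmem i h) (hP1 i h)
  have key : ∀ i j, j < i → i < t → P i ≠ P j := by
    intro i j hji hit heq
    exact hP2 i hit j hji (heq ▸ hP1 j (lt_trans hji hit))
  -- main induction: removing the chosen points one by one keeps the rank
  have main : ∀ m, m ≤ t →
      M.rkOn (M.E \ (Finset.Ico (t - m) t).image (fun i => ψ (P i))) = M.rkOn M.E := by
    intro m
    induction m with
    | zero =>
      intro _
      simp
    | succ m ih =>
      intro hm
      have ihm := ih (by omega)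
      set i := t - m - 1 with hi
      have hit : i < t := by omega
      set B := (Finset.Ico (t - m) t).image (fun j => ψ (P j)) with hB
      set e := ψ (P i) with he
      have hIco : Finset.Ico (t - (m + 1)) t = insert i (Finset.Ico (t - m) t) := by
        ext x
        simp only [Finset.mem_Ico, Finset.mem_insert]
        omega
      have himg : (Finset.Ico (t - (m + 1)) t).image (fun j => ψ (P j)) = insert e B := by
        rw [hIco, Finset.image_insert]
      have heB : e ∉ B := by
        simp only [hB, Finset.mem_image, Finset.mem_Ico]
        rintro ⟨j, ⟨hj1, hj2⟩, hje⟩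
        exact key j i (by omega) hj2 (hinj (hPJ j hj2) (hPJ i hit) hje)
      have heE : e ∈ M.E := hbij.mapsTo (hPJ i hit)
      have heEB : e ∈ M.E \ B := Finset.mem_sdiff.2 ⟨heE, heB⟩
      set X := (M.E \ B).erase e with hX
      have hXeq : M.E \ (Finset.Ico (t - (m + 1)) t).image (fun j => ψ (P j)) = X := by
        rw [himg, hX]
        ext x
        simp only [Finset.mem_sdiff, Finset.mem_erase, Finset.mem_insert]
        tauto
      have hinsX : insert e X = M.E \ B := Finset.insert_erase heEB
      -- the line through P i
      have hl : ℓ i ∈ S.Λ := hmem i hit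
      have hlsub : ℓ i ⊆ S.J := S.line_sub _ hl
      have hcard3 : (ℓ i).card = 3 := S.line_card _ hl
      set Y := ((ℓ i).erase (P i)).image ψ with hY
      have hYE : Y ⊆ M.E := by
        intro y hy
        obtain ⟨q, hq, rfl⟩ := Finset.mem_image.1 hy
        exact hbij.mapsTo (hlsub (Finset.mem_of_mem_erase hq))
      have hYcard : Y.card = 2 := by
        rw [hY, Finset.card_image_of_injOn (fun a ha b hb hab =>
          hinj (hlsub (Finset.mem_of_mem_erase ha)) (hlsub (Finset.mem_of_mem_erase hb)) hab),
          Finset.card_erase_of_mem (hP1 i hit), hcard3]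
      have hYX : Y ⊆ X := by
        intro y hy
        obtain ⟨q, hq, rfl⟩ := Finset.mem_image.1 hy
        obtain ⟨hqne, hqmem⟩ := Finset.mem_erase.1 hq
        have hqJ : q ∈ S.J := hlsub hqmem
        refine Finset.mem_erase.2 ⟨fun h => hqne (hinj hqJ (hPJ i hit) h), ?_⟩
        refine Finset.mem_sdiff.2 ⟨hbij.mapsTo hqJ, ?_⟩
        simp only [hB, Finset.mem_image, Finset.mem_Ico]
        rintro ⟨j, ⟨hj1, hj2⟩, hje⟩
        have hij : i < j := by omega
        have : q ≠ P j := fun h => hP2 j hj2 i hij (h ▸ hqmem)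
        exact this (hinj hqJ (hPJ j hj2) hje.symm)
      have hinsY : insert e Y = (ℓ i).image ψ := by
        rw [hY, he, ← Finset.image_insert, Finset.insert_erase (hP1 i hit)]
      have hlimg_card : ((ℓ i).image ψ).card = 3 := by
        rw [Finset.card_image_of_injOn (fun a ha b hb hab => hinj (hlsub ha) (hlsub hb) hab),
          hcard3]
      have hrk_line : M.rkOn ((ℓ i).image ψ) ≤ 2 := by
        apply Finset.sup_le
        intro I hI
        rw [Finset.mem_filter, Finset.mem_powerset] at hI
        by_contra hc
        push_neg at hc
        have hIeq : I = (ℓ i).image ψ :=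
          Finset.eq_of_subset_of_card_le hI.1 (by omega)
        exact hdep _ hl (hIeq ▸ hI.2)
      have hYindep : M.Indep Y := hsimple Y hYE (by omega)
      have hrkY : 2 ≤ M.rkOn Y := by
        have := aux_indep_card_le_rkOn M hYindep (subset_refl Y)
        omega
      have hspan : M.rkOn (insert e Y) = M.rkOn Y := by
        have h1 : M.rkOn Y ≤ M.rkOn (insert e Y) :=
          aux_rkOn_mono M (Finset.subset_insert e Y)
        have h2 : M.rkOn (insert e Y) ≤ 2 := by rw [hinsY]; exact hrk_line
        omega
      have hstep := aux_rkOn_insert_of_spanned M hYX hspan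
      rw [hXeq, ← hstep, hinsX, ihm]
  have hmain := main t (le_refl t)
  rw [Nat.sub_self] at hmain
  set D := (Finset.Ico 0 t).image (fun i => ψ (P i)) with hD
  have hinj2 : Set.InjOn (fun i => ψ (P i)) ↑(Finset.Ico 0 t) := by
    intro a ha b hb hab
    simp only [Finset.coe_Ico, Set.mem_Ico] at ha hb
    by_contra hne2
    rcases Nat.lt_or_ge a b with h | h
    · exact key b a h hb.2 (hinj (hPJ b hb.2) (hPJ a ha.2) hab.symm)
    · exact key a b (by omega) ha.2 (hinj (hPJ a ha.2) (hPJ b hb.2) hab)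
  have hDcard : D.card = t := by
    rw [hD, Finset.card_image_of_injOn hinj2, Nat.card_Ico]
    omega
  have hDE : D ⊆ M.E := by
    intro y hy
    obtain ⟨j, hj, rfl⟩ := Finset.mem_image.1 hy
    exact hbij.mapsTo (hPJ j (Finset.mem_Ico.1 hj).2)
  have hfinal : M.rk ≤ M.E.card - D.card := by
    have h1 : M.rk = M.rkOn (M.E \ D) := hmain.symm
    have h2 : M.rkOn (M.E \ D) ≤ (M.E \ D).card := aux_rkOn_le_card M _
    rw [Finset.card_sdiff_of_subset hDE] at h2
    omega
  have hDle : D.card ≤ M.E.card := Finset.card_le_card hDE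
  rw [PLS.rk, ← ht]
  omega

end
end

section
/- Let the PLS (J,Λ) be line-preservingly modeled by a graph G=(V,E) via ψ:J→E. If C is a cycle of (J,Λ) whose induced cycle-PLS (C*,Λ*) satisfies rk(C*,Λ*) = mrk(ψ(C*)), where mrk denotes the rank in the cycle matroid of G, then the edge set ψ(C*) is a wheel of G. -/
open scoped Classical
noncomputable section

lemma exists_third {α : Type*} [DecidableEq α] {s : Finset α} {a b : α}
    (hs : s.card = 3) (ha : a ∈ s) (hb : b ∈ s) (hab : a ≠ b) :
    ∃ c, c ≠ a ∧ c ≠ b ∧ s = {a, b, c} := by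
  have hab' : ({a, b} : Finset α) ⊆ s := by
    intro y hy; rcases Finset.mem_insert.1 hy with rfl | hy
    · exact ha
    · rwa [Finset.mem_singleton.1 hy]
  have hcard2 : ({a, b} : Finset α).card = 2 := by
    rw [Finset.card_insert_of_notMem (by simpa using hab), Finset.card_singleton]
  have h1 : (s \ {a, b}).card = 1 := by
    rw [Finset.card_sdiff_of_subset hab', hs, hcard2]
  obtain ⟨c, hc⟩ := Finset.card_eq_one.1 h1
  have hcs : c ∈ s \ ({a, b} : Finset α) := by rw [hc]; exact Finset.mem_singleton_self c
  rw [Finset.mem_sdiff] at hcs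
  refine ⟨c, ?_, ?_, ?_⟩
  · rintro rfl; exact hcs.2 (by simp)
  · rintro rfl; exact hcs.2 (by simp)
  · apply Finset.Subset.antisymm
    · intro y hy
      by_cases hy2 : y ∈ ({a, b} : Finset α)
      · simp only [Finset.mem_insert, Finset.mem_singleton] at hy2 ⊢; tauto
      · have hys : y ∈ s \ ({a, b} : Finset α) := Finset.mem_sdiff.2 ⟨hy, hy2⟩
        rw [hc] at hys
        simp only [Finset.mem_singleton] at hys
        simp [hys]
    · intro y hy
      simp only [Finset.mem_insert, Finset.mem_singleton] at hy
      rcases hy with rfl | rfl | rfl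
      · exact ha
      · exact hb
      · exact hcs.1

lemma tri_struct {V : Type*} {G : SimpleGraph V} {T : Finset (Sym2 V)} (hT : IsTriangle G T)
    {e1 e2 e3 : Sym2 V} (he : T = {e1, e2, e3}) (h12 : e1 ≠ e2) (h13 : e1 ≠ e3)
    (h23 : e2 ≠ e3) :
    ∃ h u v : V, G.Adj h u ∧ G.Adj h v ∧ G.Adj u v ∧
      e1 = s(h, u) ∧ e2 = s(h, v) ∧ e3 = s(u, v) := by
  obtain ⟨a, b, c, hab, hbc, hac, hTabc⟩ := hT
  have hset : ({e1, e2, e3} : Finset (Sym2 V)) = {s(a,b), s(b,c), s(a,c)} := by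
    rw [← he, hTabc]
  have m1 : e1 = s(a,b) ∨ e1 = s(b,c) ∨ e1 = s(a,c) := by
    have h' : e1 ∈ ({s(a,b), s(b,c), s(a,c)} : Finset (Sym2 V)) := by rw [← hset]; simp
    simpa using h'
  have m2 : e2 = s(a,b) ∨ e2 = s(b,c) ∨ e2 = s(a,c) := by
    have h' : e2 ∈ ({s(a,b), s(b,c), s(a,c)} : Finset (Sym2 V)) := by rw [← hset]; simp
    simpa using h'
  have m3 : e3 = s(a,b) ∨ e3 = s(b,c) ∨ e3 = s(a,c) := by
    have h' : e3 ∈ ({s(a,b), s(b,c), s(a,c)} : Finset (Sym2 V)) := by rw [← hset]; simp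
    simpa using h'
  rcases m1 with rfl|rfl|rfl <;> rcases m2 with h2|h2|h2 <;> rcases m3 with h3|h3|h3 <;>
    subst h2 <;> try subst h3
  all_goals first
    | exact absurd rfl h12
    | exact absurd rfl h13
    | exact absurd rfl h23
    | exact ⟨b, a, c, hab.symm, hbc, hac, Sym2.eq_swap, rfl, rfl⟩
    | exact ⟨a, b, c, hab, hac, hbc, rfl, rfl, rfl⟩
    | exact ⟨b, c, a, hbc, hab.symm, hac.symm, rfl, Sym2.eq_swap, Sym2.eq_swap⟩
    | exact ⟨c, b, a, hbc.symm, hac.symm, hab.symm, Sym2.eq_swap, Sym2.eq_swap, Sym2.eq_swap⟩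
    | exact ⟨a, c, b, hac, hab, hbc.symm, rfl, rfl, Sym2.eq_swap⟩
    | exact ⟨c, a, b, hac.symm, hbc.symm, hab, Sym2.eq_swap, Sym2.eq_swap, rfl⟩


lemma grkOn_eq_card_supp {V : Type*} [Fintype V] (B : Finset (Sym2 V)) (v₀ : V)
    (hv₀ : ∃ e ∈ B, v₀ ∈ e)
    (hconn : ∀ a : V, (∃ e ∈ B, a ∈ e) →
      (SimpleGraph.fromEdgeSet (B : Set (Sym2 V))).Reachable a v₀) :
    (grkOn V B : ℤ) =
      ((Finset.univ.filter fun a : V => ∃ e ∈ B, a ∈ e).card : ℤ) - 1 := by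
  classical
  set Gr := SimpleGraph.fromEdgeSet (B : Set (Sym2 V)) with hGr
  set Sp := Finset.univ.filter (fun a : V => ∃ e ∈ B, a ∈ e) with hSp
  have hiso : ∀ a : V, a ∉ Sp → ∀ b : V, Gr.Reachable a b → a = b := by
    intro a ha b hr
    obtain ⟨w⟩ := hr
    cases w with
    | nil => rfl
    | @cons _ c _ h' p =>
      rw [hGr, SimpleGraph.fromEdgeSet_adj] at h'
      exact absurd (Finset.mem_filter.2 ⟨Finset.mem_univ a,
        ⟨_, Finset.mem_coe.1 h'.1, Sym2.mem_mk_left a c⟩⟩) ha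
  have hv₀Sp : v₀ ∈ Sp := Finset.mem_filter.2 ⟨Finset.mem_univ _, hv₀⟩
  let f : {a : V // a ∉ Sp} ⊕ PUnit.{1} → Gr.ConnectedComponent := fun z =>
    match z with
    | Sum.inl a => Gr.connectedComponentMk a.1
    | Sum.inr _ => Gr.connectedComponentMk v₀
  have hbij : Function.Bijective f := by
    constructor
    · rintro (⟨a, ha⟩ | ⟨⟩) (⟨b, hb⟩ | ⟨⟩) hfe
      · have hr := SimpleGraph.ConnectedComponent.exact hfe
        have := hiso a ha b hr
        subst this; rfl
      · exfalso
        have hr := SimpleGraph.ConnectedComponent.exact hfe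
        have := hiso a ha v₀ hr
        exact ha (this ▸ hv₀Sp)
      · exfalso
        have hr := SimpleGraph.ConnectedComponent.exact hfe
        have := hiso b hb v₀ hr.symm
        exact hb (this ▸ hv₀Sp)
      · rfl
    · intro comp
      obtain ⟨w, rfl⟩ := comp.exists_rep
      by_cases hw : w ∈ Sp
      · refine ⟨Sum.inr PUnit.unit, ?_⟩
        have hreach : Gr.Reachable w v₀ := hconn w (Finset.mem_filter.1 hw).2
        exact SimpleGraph.ConnectedComponent.sound hreach.symm
      · exact ⟨Sum.inl ⟨w, hw⟩, rfl⟩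
  have hcardcc : Nat.card Gr.ConnectedComponent = (Fintype.card V - Sp.card) + 1 := by
    rw [← Nat.card_eq_of_bijective f hbij]
    rw [Nat.card_sum]
    have h1 : Nat.card {a : V // a ∉ Sp} = Fintype.card V - Sp.card := by
      rw [Nat.card_eq_fintype_card, Fintype.card_subtype]
      have hsplit := Finset.card_filter_add_card_filter_not
        (s := (Finset.univ : Finset V)) (p := fun a => a ∈ Sp)
      have hmem : (Finset.univ.filter fun a : V => a ∈ Sp) = Sp := by
        ext a; simp
      rw [hmem, Finset.card_univ] at hsplit
      omega
    rw [h1]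
    simp
  have hle : Sp.card ≤ Fintype.card V := Finset.card_le_univ Sp
  have hge : 1 ≤ Sp.card := Finset.card_pos.2 ⟨v₀, hv₀Sp⟩
  unfold grkOn
  rw [← hGr, hcardcc]
  omega


theorem statement_6 {α V : Type} [Fintype V] (S : PLS α) (G : SimpleGraph V)
    (ψ : α → Sym2 V) (h : LinePres S G ψ) (C : PLSCycle α) (hC : C.In S.Λ)
    (hrk : (C.cptSet.card : ℤ) - (C.clineSet.card : ℤ) = (grkOn V (C.cptSet.image ψ) : ℤ)) :
    IsWheel G (C.cptSet.image ψ) := by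
  classical
  obtain ⟨hbij, htri⟩ := h
  have hn2 : 2 ≤ C.n := C.two_le
  set n := C.n with hnn
  have hcl_line : ∀ i, i + 1 < n → C.cline i = C.line i := by
    intro i hi; unfold PLSCycle.cline; rw [← hnn, if_pos hi]
  have hcl_last : C.cline (n - 1) = C.closing := by
    unfold PLSCycle.cline; rw [← hnn, if_neg (by omega)]
  have hmemΛ : ∀ i, i < n → C.cline i ∈ S.Λ := by
    intro i hi
    by_cases h1 : i + 1 < n
    · rw [hcl_line i h1]; exact hC.1 i h1
    · rw [show i = n - 1 by omega, hcl_last]; exact hC.2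
  have hcard3 : ∀ i, i < n → (C.cline i).card = 3 := fun i hi => S.line_card _ (hmemΛ i hi)
  have hsubJ : ∀ i, i < n → C.cline i ⊆ S.J := fun i hi => S.line_sub _ (hmemΛ i hi)
  have hclne : ∀ i j, i < j → j < n → C.cline i ≠ C.cline j := by
    intro i j hij hj
    by_cases hj1 : j + 1 < n
    · rw [hcl_line i (by omega), hcl_line j hj1]; exact C.lines_ne i j hij hj1
    · rw [show j = n - 1 by omega, hcl_last, hcl_line i (by omega)]
      obtain ⟨q, hq1, hq2⟩ := C.closing_new
      intro hEq
      exact hq2 i (by omega) (by rw [hEq]; exact hq1)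
  have hint : ∀ i j, i < n → j < n → i ≠ j → ∀ a b : α, a ∈ C.cline i → a ∈ C.cline j →
      b ∈ C.cline i → b ∈ C.cline j → a = b := by
    intro i j hi hj hij a b hai haj hbi hbj
    by_contra hab
    have hne : C.cline i ≠ C.cline j := by
      rcases Nat.lt_or_ge i j with h' | h'
      · exact hclne i j h' hj
      · exact (hclne j i (by omega) hi).symm
    have hle := S.line_inter _ (hmemΛ i hi) _ (hmemΛ j hj) hne
    have hsub : ({a, b} : Finset α) ⊆ C.cline i ∩ C.cline j := by
      intro y hy
      rcases Finset.mem_insert.1 hy with rfl | hy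
      · exact Finset.mem_inter.2 ⟨hai, haj⟩
      · rw [Finset.mem_singleton.1 hy]; exact Finset.mem_inter.2 ⟨hbi, hbj⟩
    have h2 : 2 ≤ (C.cline i ∩ C.cline j).card := by
      have hc2 : ({a, b} : Finset α).card = 2 := by
        rw [Finset.card_insert_of_notMem (by simpa using hab), Finset.card_singleton]
      calc 2 = ({a, b} : Finset α).card := hc2.symm
        _ ≤ _ := Finset.card_le_card hsub
    omega
  have hn3 : 3 ≤ n := by
    by_contra hlt
    have h01 : (0 : ℕ) + 1 < n := by omega
    have hp1c : C.p 1 ∈ C.closing := by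
      have hcl := C.closing_last; rw [← hnn] at hcl
      rwa [show n - 1 = 1 by omega] at hcl
    have h0c : C.cline 0 = C.line 0 := hcl_line 0 h01
    have h1c : C.cline 1 = C.closing := by rw [show (1 : ℕ) = n - 1 by omega, hcl_last]
    have heq := hint 0 1 (by omega) (by omega) (by omega) (C.p 0) (C.p 1)
      (by rw [h0c]; exact C.p_mem_left 0 (by omega))
      (by rw [h1c]; exact C.closing_first)
      (by rw [h0c]; exact C.p_mem_right 0 (by omega))
      (by rw [h1c]; exact hp1c)
    exact C.p_ne 0 (by omega) heq
  have hσlt : ∀ i, i < n → (i + 1) % n < n := fun i hi => Nat.mod_lt _ (by omega)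
  have hσeq : ∀ i, i + 1 < n → (i + 1) % n = i + 1 := fun i hi => Nat.mod_eq_of_lt hi
  have hσlast : (n - 1 + 1) % n = 0 := by
    rw [show n - 1 + 1 = n by omega]; exact Nat.mod_self n
  have hpmem : ∀ i, i < n → C.p i ∈ C.cline i := by
    intro i hi
    by_cases h1 : i + 1 < n
    · rw [hcl_line i h1]; exact C.p_mem_left i (by omega)
    · rw [show i = n - 1 by omega, hcl_last]
      have hcl := C.closing_last; rwa [← hnn] at hcl
  have hpmemσ : ∀ i, i < n → C.p ((i + 1) % n) ∈ C.cline i := by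
    intro i hi
    by_cases h1 : i + 1 < n
    · rw [hcl_line i h1, hσeq i h1]; exact C.p_mem_right i (by omega)
    · rw [show i = n - 1 by omega, hσlast, hcl_last]; exact C.closing_first
  have hconsec : ∀ i, i < n → ∀ a, a ∈ C.cline i → a ∈ C.cline ((i + 1) % n) →
      a = C.p ((i + 1) % n) := by
    intro i hi a ha1 ha2
    have hne : i ≠ (i + 1) % n := by
      by_cases h1 : i + 1 < n
      · rw [hσeq i h1]; omega
      · rw [show i = n - 1 by omega, hσlast]; omega
    exact hint i ((i + 1) % n) hi (hσlt i hi) hne a (C.p ((i + 1) % n)) ha1 ha2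
      (hpmemσ i hi) (hpmem _ (hσlt i hi))
  have hdisj_path : ∀ i j, i < j → j + 1 < n → j ≠ i + 1 →
      ∀ a, a ∈ C.cline i → a ∈ C.cline j → False := by
    intro i j hij hj1 hji a hai haj
    have hiff := C.lines_inter_iff i j hij (by omega)
    rw [hcl_line i (by omega)] at hai
    rw [hcl_line j hj1] at haj
    exact hji (hiff.1 ⟨a, Finset.mem_inter.2 ⟨hai, haj⟩⟩)
  have hpwrap : C.p (n - 1) ≠ C.p 0 := by
    intro hEq
    have h1 : C.p (n - 1) ∈ C.cline (n - 2) := by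
      have h' := hpmemσ (n - 2) (by omega)
      rwa [show (n - 2 + 1) % n = n - 1 by rw [Nat.mod_eq_of_lt (by omega)]; omega] at h'
    have h0 : C.p 0 ∈ C.cline 0 := hpmem 0 (by omega)
    by_cases hn4 : 4 ≤ n
    · exact hdisj_path 0 (n - 2) (by omega) (by omega) (by omega) (C.p (n - 1))
        (by rw [hEq]; exact h0) h1
    · have h1' : C.p (n - 1) ∈ C.cline ((0 + 1) % n) := by
        rwa [show n - 2 = (0 + 1) % n by rw [Nat.mod_eq_of_lt (by omega)]; omega] at h1
      have h2 := hconsec 0 (by omega) (C.p (n - 1)) (by rw [hEq]; exact h0) h1'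
      rw [show (0 + 1) % n = 1 by rw [Nat.mod_eq_of_lt (by omega)]] at h2
      have hne12 := C.p_ne 1 (by omega)
      rw [show n - 1 = 2 by omega] at h2
      exact hne12 h2.symm
  have hp_ne_cyc : ∀ i, i < n → C.p i ≠ C.p ((i + 1) % n) := by
    intro i hi
    by_cases h1 : i + 1 < n
    · rw [hσeq i h1]; exact C.p_ne i (by omega)
    · rw [show i = n - 1 by omega, hσlast]; exact hpwrap
  haveI : Inhabited α := ⟨C.p 0⟩
  have hthird : ∀ i, i < n → ∃ y, y ≠ C.p i ∧ y ≠ C.p ((i + 1) % n) ∧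
      C.cline i = {C.p i, C.p ((i + 1) % n), y} := by
    intro i hi
    obtain ⟨c, h1, h2, h3⟩ := exists_third (hcard3 i hi) (hpmem i hi) (hpmemσ i hi)
      (hp_ne_cyc i hi)
    exact ⟨c, h1, h2, h3⟩
  choose! x hx1 hx2 hx3 using hthird
  have hxmem : ∀ i, i < n → x i ∈ C.cline i := by
    intro i hi; rw [hx3 i hi]; simp
  have hclosing_decomp : C.closing = {C.p (n - 1), C.p 0, x (n - 1)} := by
    have hcl := hx3 (n - 1) (by omega)
    rwa [hσlast, hcl_last] at hcl
  have hxlast : ∀ k, k + 1 < n → x (n - 1) ∉ C.line k := by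
    obtain ⟨q, hq1, hq2⟩ := C.closing_new
    have hqx : q = x (n - 1) := by
      have hq1' : q ∈ ({C.p (n - 1), C.p 0, x (n - 1)} : Finset α) := by
        rw [← hclosing_decomp]; exact hq1
      simp only [Finset.mem_insert, Finset.mem_singleton] at hq1'
      rcases hq1' with rfl | rfl | rfl
      · exact (hq2 (n - 2) (by omega) (by
          have h' := C.p_mem_right (n - 2) (by omega)
          rwa [show n - 2 + 1 = n - 1 by omega] at h')).elim
      · exact (hq2 0 (by omega) (C.p_mem_left 0 (by omega))).elim
      · rfl
    intro k hk
    rw [← hqx]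
    exact hq2 k (by omega)
  have hdisj : ∀ i j, i < j → j < n → j ≠ (i + 1) % n → i ≠ (j + 1) % n →
      ∀ a, a ∈ C.cline i → a ∈ C.cline j → False := by
    intro i j hij hj h1 h2 a hai haj
    by_cases hj1 : j + 1 < n
    · refine hdisj_path i j hij hj1 ?_ a hai haj
      rw [hσeq i (by omega)] at h1; exact h1
    · have hj' : j = n - 1 := by omega
      have hi2 : i ≠ n - 2 := by
        intro hEq; apply h1; rw [hσeq i (by omega), hj']; omega
      have hi0 : i ≠ 0 := by
        intro hEq; apply h2; rw [hj', hσlast]; exact hEq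
      rw [hj', hcl_last, hclosing_decomp] at haj
      simp only [Finset.mem_insert, Finset.mem_singleton] at haj
      rcases haj with rfl | rfl | rfl
      · have hmem2 : C.p (n - 1) ∈ C.cline (n - 2) := by
          have h' := hpmemσ (n - 2) (by omega)
          rwa [show (n - 2 + 1) % n = n - 1 by
            rw [Nat.mod_eq_of_lt (by omega)]; omega] at h'
        by_cases hi3 : i = n - 3
        · have hmod : (n - 3 + 1) % n = n - 2 := by
            rw [Nat.mod_eq_of_lt (by omega)]; omega
          have heq := hconsec (n - 3) (by omega) (C.p (n - 1))
            (by rw [← hi3]; exact hai) (by rw [hmod]; exact hmem2)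
          rw [hmod] at heq
          have hne := hp_ne_cyc (n - 2) (by omega)
          rw [show (n - 2 + 1) % n = n - 1 by
            rw [Nat.mod_eq_of_lt (by omega)]; omega] at hne
          exact hne heq.symm
        · exact hdisj_path i (n - 2) (by omega) (by omega) (by omega) (C.p (n - 1)) hai hmem2
      · have hmem0 : C.p 0 ∈ C.cline 0 := hpmem 0 (by omega)
        by_cases hi1 : i = 1
        · have hmod : (0 + 1) % n = 1 := by rw [Nat.mod_eq_of_lt (by omega)]
          have heq := hconsec 0 (by omega) (C.p 0) hmem0 (by rw [hmod, ← hi1]; exact hai)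
          rw [hmod] at heq
          have hne := hp_ne_cyc 0 (by omega)
          rw [hmod] at hne
          exact hne heq
        · exact hdisj_path 0 i (by omega) (by omega) (by omega) (C.p 0) hmem0 hai
      · rw [hcl_line i (by omega)] at hai
        exact hxlast i (by omega) hai
  have hdisj' : ∀ i j, i < n → j < n → i ≠ j → j ≠ (i + 1) % n → i ≠ (j + 1) % n →
      ∀ a, a ∈ C.cline i → a ∈ C.cline j → False := by
    intro i j hi hj hij h1 h2 a hai haj
    rcases Nat.lt_or_ge i j with h' | h'
    · exact hdisj i j h' hj h1 h2 a hai haj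
    · exact hdisj j i (by omega) hi h2 h1 a haj hai
  have hpinj : ∀ i j, i < j → j < n → C.p i ≠ C.p j := by
    intro i j hij hj hEq
    by_cases hcons : j = i + 1
    · have hne := hp_ne_cyc i (by omega)
      rw [hσeq i (by omega)] at hne
      exact hne (by rw [← hcons]; exact hEq)
    · by_cases hwrap : i = 0 ∧ j = n - 1
      · refine hpwrap ?_
        rw [hwrap.1, hwrap.2] at hEq
        exact hEq.symm
      · refine hdisj i j hij hj ?_ ?_ (C.p i) (hpmem i (by omega)) (by rw [hEq]; exact hpmem j hj)
        · rw [hσeq i (by omega)]; exact hcons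
        · by_cases hj1 : j + 1 < n
          · rw [hσeq j hj1]; omega
          · rw [show j = n - 1 by omega, hσlast]
            intro h0; exact hwrap ⟨h0, by omega⟩
  have hxonly : ∀ i j, i < n → j < n → x i ∈ C.cline j → i = j := by
    intro i j hi hj hmem
    by_contra hij
    by_cases hc1 : j = (i + 1) % n
    · exact hx2 i hi (hconsec i hi (x i) (hxmem i hi) (by rw [← hc1]; exact hmem))
    · by_cases hc2 : i = (j + 1) % n
      · have heq := hconsec j hj (x i) hmem (by rw [← hc2]; exact hxmem i hi)
        rw [← hc2] at heq
        exact hx1 i hi heq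
      · exact hdisj' i j hi hj hij hc1 hc2 (x i) (hxmem i hi) hmem
  have hxp : ∀ i j, i < n → j < n → x i ≠ C.p j := by
    intro i j hi hj hEq
    have hji : i = j := hxonly i j hi hj (by rw [hEq]; exact hpmem j hj)
    rw [← hji] at hEq
    exact hx1 i hi hEq
  have hxinj : ∀ i j, i < n → j < n → x i = x j → i = j := by
    intro i j hi hj hEq
    exact hxonly i j hi hj (by rw [hEq]; exact hxmem j hj)
  have hcpt : C.cptSet = (Finset.range n).image C.p ∪ (Finset.range n).image x := by
    unfold PLSCycle.cptSet
    rw [← hnn]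
    apply Finset.Subset.antisymm
    · intro a ha
      obtain ⟨i, hi', hmem⟩ := Finset.mem_biUnion.1 ha
      rw [Finset.mem_range] at hi'
      rw [hx3 i hi'] at hmem
      simp only [Finset.mem_insert, Finset.mem_singleton] at hmem
      rcases hmem with rfl | rfl | rfl
      · exact Finset.mem_union_left _ (Finset.mem_image_of_mem _ (Finset.mem_range.2 hi'))
      · exact Finset.mem_union_left _ (Finset.mem_image_of_mem _ (Finset.mem_range.2 (hσlt i hi')))
      · exact Finset.mem_union_right _ (Finset.mem_image_of_mem _ (Finset.mem_range.2 hi'))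
    · intro a ha
      rcases Finset.mem_union.1 ha with h' | h' <;>
        obtain ⟨i, hi', rfl⟩ := Finset.mem_image.1 h'
      · exact Finset.mem_biUnion.2 ⟨i, hi', hpmem i (Finset.mem_range.1 hi')⟩
      · exact Finset.mem_biUnion.2 ⟨i, hi', hxmem i (Finset.mem_range.1 hi')⟩
  have hpinjOn : Set.InjOn C.p ↑(Finset.range n) := by
    intro i hi j hj hEq
    simp only [Finset.coe_range, Set.mem_Iio] at hi hj
    by_contra hij
    rcases Nat.lt_or_ge i j with h' | h'
    · exact hpinj i j h' hj hEq
    · exact hpinj j i (by omega) hi hEq.symm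
  have hxinjOn : Set.InjOn x ↑(Finset.range n) := by
    intro i hi j hj hEq
    simp only [Finset.coe_range, Set.mem_Iio] at hi hj
    exact hxinj i j hi hj hEq
  have hcard_cpt : C.cptSet.card = 2 * n := by
    rw [hcpt, Finset.card_union_of_disjoint, Finset.card_image_of_injOn hpinjOn,
      Finset.card_image_of_injOn hxinjOn, Finset.card_range]
    · ring
    · rw [Finset.disjoint_left]
      intro a hap hax
      obtain ⟨k, hk', rfl⟩ := Finset.mem_image.1 hap
      obtain ⟨m, hm', hEq⟩ := Finset.mem_image.1 hax
      exact hxp m k (Finset.mem_range.1 hm') (Finset.mem_range.1 hk') hEq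
  have hcard_cls : C.clineSet.card = n := by
    unfold PLSCycle.clineSet
    rw [← hnn, Finset.card_image_of_injOn, Finset.card_range]
    intro i hi j hj hEq
    simp only [Finset.coe_range, Set.mem_Iio] at hi hj
    by_contra hij
    rcases Nat.lt_or_ge i j with h' | h'
    · exact hclne i j h' hj hEq
    · exact hclne j i (by omega) hi hEq.symm
  haveI : Inhabited V := ⟨(Quot.out (ψ (C.p 0))).1⟩
  have hinj : Set.InjOn ψ ↑S.J := hbij.injOn
  have hpJ : ∀ i, i < n → C.p i ∈ (S.J : Set α) := fun i hi => hsubJ i hi (hpmem i hi)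
  have hxJ : ∀ i, i < n → x i ∈ (S.J : Set α) := fun i hi => hsubJ i hi (hxmem i hi)
  have htr : ∀ i, i < n → ∃ hh uu vv : V, G.Adj hh uu ∧ G.Adj hh vv ∧ G.Adj uu vv ∧
      ψ (C.p i) = s(hh, uu) ∧ ψ (C.p ((i + 1) % n)) = s(hh, vv) ∧ ψ (x i) = s(uu, vv) := by
    intro i hi
    have himg : (C.cline i).image ψ = {ψ (C.p i), ψ (C.p ((i + 1) % n)), ψ (x i)} := by
      rw [hx3 i hi]
      simp [Finset.image_insert]
    have hne1 : ψ (C.p i) ≠ ψ (C.p ((i + 1) % n)) := by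
      intro hEq
      exact hp_ne_cyc i hi (hinj (hpJ i hi) (hpJ _ (hσlt i hi)) hEq)
    have hne2 : ψ (C.p i) ≠ ψ (x i) := by
      intro hEq
      exact hxp i i hi hi (hinj (hpJ i hi) (hxJ i hi) hEq).symm
    have hne3 : ψ (C.p ((i + 1) % n)) ≠ ψ (x i) := by
      intro hEq
      exact hx2 i hi (hinj (hpJ _ (hσlt i hi)) (hxJ i hi) hEq).symm
    exact tri_struct (htri _ (hmemΛ i hi)) himg hne1 hne2 hne3
  choose! hb ub vb hadj1 hadj2 hadj3 hE1 hE2 hE3 using htr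
  have hdich : ∀ i, i < n →
      (hb ((i + 1) % n) = hb i ∧ ub ((i + 1) % n) = vb i) ∨
      (hb ((i + 1) % n) = vb i ∧ ub ((i + 1) % n) = hb i) := by
    intro i hi
    have he : s(hb i, vb i) = s(hb ((i + 1) % n), ub ((i + 1) % n)) := by
      rw [← hE2 i hi, ← hE1 ((i + 1) % n) (hσlt i hi)]
    rw [Sym2.eq_iff] at he
    rcases he with ⟨h1, h2⟩ | ⟨h1, h2⟩
    · exact Or.inl ⟨h1.symm, h2.symm⟩
    · exact Or.inr ⟨h2.symm, h1.symm⟩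
  have hpcpt : ∀ i, i < n → C.p i ∈ C.cptSet := by
    intro i hi; rw [hcpt]
    exact Finset.mem_union_left _ (Finset.mem_image_of_mem _ (Finset.mem_range.2 hi))
  have hxcpt : ∀ i, i < n → x i ∈ C.cptSet := by
    intro i hi; rw [hcpt]
    exact Finset.mem_union_right _ (Finset.mem_image_of_mem _ (Finset.mem_range.2 hi))
  set Eset := C.cptSet.image ψ with hEset
  have hE1mem : ∀ i, i < n → ψ (C.p i) ∈ Eset := fun i hi =>
    Finset.mem_image_of_mem ψ (hpcpt i hi)
  have hE3mem : ∀ i, i < n → ψ (x i) ∈ Eset := fun i hi =>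
    Finset.mem_image_of_mem ψ (hxcpt i hi)
  set Gr := SimpleGraph.fromEdgeSet (Eset : Set (Sym2 V)) with hGr
  have hadjGr : ∀ i, i < n → Gr.Adj (hb i) (ub i) ∧ Gr.Adj (hb i) (vb i) ∧
      Gr.Adj (ub i) (vb i) := by
    intro i hi
    refine ⟨?_, ?_, ?_⟩ <;> rw [hGr, SimpleGraph.fromEdgeSet_adj]
    · exact ⟨by rw [← hE1 i hi]; exact Finset.mem_coe.2 (hE1mem i hi), (hadj1 i hi).ne⟩
    · refine ⟨?_, (hadj2 i hi).ne⟩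
      rw [← hE2 i hi]
      exact Finset.mem_coe.2 (Finset.mem_image_of_mem ψ (hpcpt _ (hσlt i hi)))
    · exact ⟨by rw [← hE3 i hi]; exact Finset.mem_coe.2 (hE3mem i hi), (hadj3 i hi).ne⟩
  have hreach : ∀ i, i < n → Gr.Reachable (hb 0) (hb i) := by
    intro i
    induction i with
    | zero => intro _; exact SimpleGraph.Reachable.refl _
    | succ k ih =>
      intro hk
      have hk' : k < n := by omega
      have hd := hdich k hk'
      rw [hσeq k (by omega)] at hd
      rcases hd with ⟨h1, _⟩ | ⟨h1, _⟩
      · rw [h1]; exact ih hk'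
      · rw [h1]; exact (ih hk').trans (hadjGr k hk').2.1.reachable
  have hconnall : ∀ a : V, (∃ e ∈ Eset, a ∈ e) → Gr.Reachable a (hb 0) := by
    rintro a ⟨e, he, hae⟩
    obtain ⟨pt, hpt, rfl⟩ := Finset.mem_image.1 he
    rw [hcpt] at hpt
    rcases Finset.mem_union.1 hpt with h' | h' <;>
      obtain ⟨i, hi', rfl⟩ := Finset.mem_image.1 h' <;>
      rw [Finset.mem_range] at hi'
    · rw [hE1 i hi', Sym2.mem_iff] at hae
      rcases hae with rfl | rfl
      · exact (hreach i hi').symm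
      · exact ((hadjGr i hi').1.symm.reachable).trans ((hreach i hi').symm)
    · rw [hE3 i hi', Sym2.mem_iff] at hae
      rcases hae with rfl | rfl
      · exact ((hadjGr i hi').1.symm.reachable).trans ((hreach i hi').symm)
      · exact ((hadjGr i hi').2.1.symm.reachable).trans ((hreach i hi').symm)
  have hv0 : ∃ e ∈ Eset, hb 0 ∈ e := by
    refine ⟨ψ (C.p 0), hE1mem 0 (by omega), ?_⟩
    rw [hE1 0 (by omega)]
    exact Sym2.mem_mk_left _ _
  have hgrk := grkOn_eq_card_supp Eset (hb 0) hv0 hconnall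
  have hsupp_card : (Finset.univ.filter fun a : V => ∃ e ∈ Eset, a ∈ e).card = n + 1 := by
    rw [hcard_cpt, hcard_cls] at hrk
    omega
  have hpred : ∀ i, i < n → ∃ j, j < n ∧ (j + 1) % n = i := by
    intro i hi
    rcases Nat.eq_zero_or_pos i with rfl | hpos
    · exact ⟨n - 1, by omega, hσlast⟩
    · exact ⟨i - 1, by omega, by rw [show i - 1 + 1 = i by omega]; exact Nat.mod_eq_of_lt hi⟩
  have hub_mem : ∀ i, i < n → (∃ j, j < n ∧ hb j = ub i) ∨ ∃ j, j < n ∧ vb j = ub i := by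
    intro i hi
    obtain ⟨j, hj, hji⟩ := hpred i hi
    have hd := hdich j hj
    rw [hji] at hd
    rcases hd with ⟨_, h2⟩ | ⟨_, h2⟩
    · right; exact ⟨j, hj, h2.symm⟩
    · left; exact ⟨j, hj, h2.symm⟩
  have hSP : (Finset.univ.filter fun a : V => ∃ e ∈ Eset, a ∈ e) =
      (Finset.range n).image hb ∪ (Finset.range n).image vb := by
    ext a
    simp only [Finset.mem_filter, Finset.mem_univ, true_and, Finset.mem_union,
      Finset.mem_image, Finset.mem_range]
    constructor
    · rintro ⟨e, he, hae⟩
      obtain ⟨pt, hpt, rfl⟩ := Finset.mem_image.1 he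
      rw [hcpt] at hpt
      rcases Finset.mem_union.1 hpt with h' | h' <;>
        obtain ⟨i, hi', rfl⟩ := Finset.mem_image.1 h' <;>
        rw [Finset.mem_range] at hi'
      · rw [hE1 i hi', Sym2.mem_iff] at hae
        rcases hae with rfl | rfl
        · exact Or.inl ⟨i, hi', rfl⟩
        · rcases hub_mem i hi' with ⟨j, hj, hEq⟩ | ⟨j, hj, hEq⟩
          · exact Or.inl ⟨j, hj, hEq⟩
          · exact Or.inr ⟨j, hj, hEq⟩
      · rw [hE3 i hi', Sym2.mem_iff] at hae
        rcases hae with rfl | rfl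
        · rcases hub_mem i hi' with ⟨j, hj, hEq⟩ | ⟨j, hj, hEq⟩
          · exact Or.inl ⟨j, hj, hEq⟩
          · exact Or.inr ⟨j, hj, hEq⟩
        · exact Or.inr ⟨i, hi', rfl⟩
    · rintro (⟨i, hi', rfl⟩ | ⟨i, hi', rfl⟩)
      · exact ⟨ψ (C.p i), hE1mem i hi', by rw [hE1 i hi']; exact Sym2.mem_mk_left _ _⟩
      · refine ⟨ψ (C.p ((i + 1) % n)), Finset.mem_image_of_mem ψ (hpcpt _ (hσlt i hi')), ?_⟩
        rw [hE2 i hi']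
        exact Sym2.mem_mk_right _ _
  by_cases hflip : ∃ i, i < n ∧ hb ((i + 1) % n) ≠ hb i
  · exfalso
    obtain ⟨i0, hi0, hfl⟩ := hflip
    have hfl' : hb ((i0 + 1) % n) = vb i0 := by
      rcases hdich i0 hi0 with ⟨h1, _⟩ | ⟨h1, _⟩
      · exact absurd h1 hfl
      · exact h1
    have hclaim : ∀ d : ℕ, ∃ j, j < n ∧ hb ((j + 1) % n) = vb j ∧
        hb (((i0 + 1) % n + d) % n) = hb ((j + 1) % n) := by
      intro d
      induction d with
      | zero =>
        refine ⟨i0, hi0, hfl', ?_⟩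
        rw [Nat.add_zero, Nat.mod_eq_of_lt (hσlt i0 hi0)]
      | succ k ih =>
        obtain ⟨j, hj, hjf, hje⟩ := ih
        have ha : ((i0 + 1) % n + k) % n < n := Nat.mod_lt _ (by omega)
        have hnext : ((i0 + 1) % n + (k + 1)) % n = (((i0 + 1) % n + k) % n + 1) % n := by
          conv_rhs => rw [Nat.mod_add_mod]
          rw [Nat.add_assoc]
        by_cases hfa : hb ((((i0 + 1) % n + k) % n + 1) % n) = hb (((i0 + 1) % n + k) % n)
        · exact ⟨j, hj, hjf, by rw [hnext, hfa]; exact hje⟩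
        · have h2 : hb ((((i0 + 1) % n + k) % n + 1) % n) = vb (((i0 + 1) % n + k) % n) := by
            rcases hdich _ ha with ⟨h1, _⟩ | ⟨h1, _⟩
            · exact absurd h1 hfa
            · exact h1
          exact ⟨_, ha, h2, by rw [hnext]⟩
    have hhsub : ∀ i, i < n → ∃ j, j < n ∧ hb i = vb j := by
      intro i hi
      have harith : ((i0 + 1) % n + (i + n - (i0 + 1) % n)) % n = i := by
        have h1 : (i0 + 1) % n ≤ n := le_of_lt (hσlt i0 hi0)
        rw [show (i0 + 1) % n + (i + n - (i0 + 1) % n) = i + n by omega,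
          Nat.add_mod_right, Nat.mod_eq_of_lt hi]
      obtain ⟨j, hj, hjf, hje⟩ := hclaim (i + n - (i0 + 1) % n)
      rw [harith] at hje
      exact ⟨j, hj, by rw [hje, hjf]⟩
    have hsub2 : (Finset.univ.filter fun a : V => ∃ e ∈ Eset, a ∈ e) ⊆
        (Finset.range n).image vb := by
      rw [hSP]
      intro a ha
      rcases Finset.mem_union.1 ha with h' | h'
      · obtain ⟨i, hi', rfl⟩ := Finset.mem_image.1 h'
        rw [Finset.mem_range] at hi'
        obtain ⟨j, hj, hEq⟩ := hhsub i hi'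
        rw [hEq]
        exact Finset.mem_image_of_mem _ (Finset.mem_range.2 hj)
      · exact h'
    have hcardle := Finset.card_le_card hsub2
    rw [hsupp_card] at hcardle
    have hle2 : ((Finset.range n).image vb).card ≤ n := by
      calc _ ≤ (Finset.range n).card := Finset.card_image_le
        _ = n := Finset.card_range n
    omega
  · push_neg at hflip
    have hhub : ∀ i, i < n → hb i = hb 0 := by
      intro i
      induction i with
      | zero => intro _; rfl
      | succ k ih =>
        intro hk
        have hk' : k < n := by omega
        have h1 := hflip k hk'
        rw [hσeq k (by omega)] at h1
        rw [h1]; exact ih hk'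
    have huv : ∀ i, i < n → ub ((i + 1) % n) = vb i := by
      intro i hi
      rcases hdich i hi with ⟨_, h2⟩ | ⟨h1, _⟩
      · exact h2
      · exfalso
        have h3 := hflip i hi
        rw [h1] at h3
        exact (hadj2 i hi).ne h3.symm
    have him : (Finset.range n).image hb = {hb 0} := by
      apply Finset.Subset.antisymm
      · intro a ha
        obtain ⟨i, hi', rfl⟩ := Finset.mem_image.1 ha
        rw [Finset.mem_range] at hi'
        rw [hhub i hi']
        exact Finset.mem_singleton_self _
      · intro a ha
        rw [Finset.mem_singleton.1 ha]
        exact Finset.mem_image_of_mem _ (Finset.mem_range.2 (by omega))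
    have hvcard : ((Finset.range n).image vb).card = n ∧
        hb 0 ∉ (Finset.range n).image vb := by
      have hcard := hsupp_card
      rw [hSP, him, ← Finset.insert_eq] at hcard
      by_cases hm : hb 0 ∈ (Finset.range n).image vb
      · rw [Finset.insert_eq_self.2 hm] at hcard
        have hle2 : ((Finset.range n).image vb).card ≤ n := by
          calc _ ≤ (Finset.range n).card := Finset.card_image_le
            _ = n := Finset.card_range n
        omega
      · rw [Finset.card_insert_of_notMem hm] at hcard
        exact ⟨by omega, hm⟩
    obtain ⟨hvc, hnm⟩ := hvcard
    have hvinjOn : Set.InjOn vb ↑(Finset.range n) :=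
      Finset.card_image_iff.1 (by rw [hvc, Finset.card_range])
    refine ⟨n, hb 0, vb, hn2, ?_, ?_, ?_, ?_⟩
    · intro i j hi hj hij hEq
      exact hij (hvinjOn (by simp [hi]) (by simp [hj]) hEq)
    · intro i hi
      have h2 := hadj2 i hi
      rwa [hhub i hi] at h2
    · intro i hi
      have h3 := hadj3 ((i + 1) % n) (hσlt i hi)
      rwa [huv i hi] at h3
    · rw [hEset, hcpt, Finset.image_union]
      have himgσ : (Finset.range n).image (fun i => (i + 1) % n) = Finset.range n := by
        apply Finset.Subset.antisymm
        · intro j hj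
          obtain ⟨i, hi', rfl⟩ := Finset.mem_image.1 hj
          rw [Finset.mem_range] at hi' ⊢
          exact hσlt i hi'
        · intro j hj
          rw [Finset.mem_range] at hj
          obtain ⟨k, hk, hkj⟩ := hpred j hj
          exact Finset.mem_image.2 ⟨k, Finset.mem_range.2 hk, hkj⟩
      congr 1
      · rw [Finset.image_image]
        conv_lhs => rw [← himgσ, Finset.image_image]
        apply Finset.image_congr
        intro i hi
        simp only [Finset.coe_range, Set.mem_Iio] at hi
        show ψ (C.p ((i + 1) % n)) = s(hb 0, vb i)
        rw [hE2 i hi, hhub i hi]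
      · rw [Finset.image_image]
        conv_lhs => rw [← himgσ, Finset.image_image]
        apply Finset.image_congr
        intro i hi
        simp only [Finset.coe_range, Set.mem_Iio] at hi
        show ψ (x ((i + 1) % n)) = s(vb i, vb ((i + 1) % n))
        rw [hE3 ((i + 1) % n) (hσlt i hi), huv i hi]

end
end
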